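/- Let X = (X_d, d ∈ D(N)) be a random network on a finite node set N, with Möbius parameters z_B = P(X_d = 1 for all d ∈ B) for nonempty B ⊆ D(N). Then X is exchangeable and dissociated if and only if the following two conditions hold: (i) z_C = z_{C′} whenever C and C′ are nonempty connected edge sets with isomorphic associated graphs; and (ii) for every simple graph x on N, P(X = x) = Σ_{B : E(x) ⊆ B ⊆ D(N)} (−1)^{|B| − |E(x)|} Π_{C} z_C, where the product runs over the edge sets C of the connected components of the graph with edge set B. -/

import Mathlib

open MeasureTheory

/-- The type of dyads over a node set `V`: unordered pairs of distinct nodes. -/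
abbrev Dyad (V : Type*) : Type _ := {d : Sym2 V // ¬ d.IsDiag}

/-- The action of a permutation of the node set on dyads. -/
def dyadPerm {V : Type*} (π : Equiv.Perm V) (d : Dyad V) : Dyad V :=
  ⟨d.1.map π, by rw [Sym2.isDiag_map (Equiv.injective π)]; exact d.2⟩

/-- A random network `X = (X_d, d ∈ D(N))` is exchangeable if its joint distribution
is invariant under every relabeling of the node set. -/
def IsExchangeable {V Ω : Type*} [MeasurableSpace Ω] (μ : Measure Ω)
    (X : Dyad V → Ω → Bool) : Prop :=
  ∀ (π : Equiv.Perm V) (f : Dyad V → Bool),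
    μ {ω | ∀ d : Dyad V, X (dyadPerm π d) ω = f d} = μ {ω | ∀ d : Dyad V, X d ω = f d}

/-- Both endpoints of the dyad `d` belong to the node set `s`. -/
def dyadIn {V : Type*} (d : Dyad V) (s : Set V) : Prop := ∀ v ∈ d.1, v ∈ s

/-- A random network is dissociated if, for every pair of disjoint node sets `N₁`, `N₂`,
the families `(X_d : d ∈ D(N₁))` and `(X_d : d ∈ D(N₂))` are independent. -/
def IsDissociated {V Ω : Type*} [MeasurableSpace Ω] (μ : Measure Ω)
    (X : Dyad V → Ω → Bool) : Prop :=
  ∀ N₁ N₂ : Set V, Disjoint N₁ N₂ → ∀ f g : Dyad V → Bool,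
    μ ({ω | ∀ d : Dyad V, dyadIn d N₁ → X d ω = f d} ∩
        {ω | ∀ d : Dyad V, dyadIn d N₂ → X d ω = g d})
      = μ {ω | ∀ d : Dyad V, dyadIn d N₁ → X d ω = f d} *
          μ {ω | ∀ d : Dyad V, dyadIn d N₂ → X d ω = g d}

/-- The set of nodes covered by a set of dyads `C`. -/
def dyadSupp {V : Type*} (C : Set (Dyad V)) : Set V := {v | ∃ d ∈ C, v ∈ d.1}

/-- The graph on the node set `V` whose edges are the dyads in `C`. -/
def graphOfDyads {V : Type*} (C : Set (Dyad V)) : SimpleGraph V :=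
  SimpleGraph.fromEdgeSet (Subtype.val '' C)

/-- `C` is a nonempty connected edge set: the graph it spans (viewed without isolated
vertices, i.e. on its support) is connected. -/
def IsConnEdgeSet {V : Type*} (C : Set (Dyad V)) : Prop :=
  C.Nonempty ∧ ∀ u ∈ dyadSupp C, ∀ v ∈ dyadSupp C, (graphOfDyads C).Reachable u v

/-- The edge sets of the connected components of the graph with edge set `B`. -/
noncomputable def componentsOf {V : Type*} [Fintype V] [DecidableEq V]
    (B : Finset (Dyad V)) : Finset (Finset (Dyad V)) := by
  classical
  exact B.image fun d => B.filter fun e =>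
    ∃ u v, u ∈ d.1 ∧ v ∈ e.1 ∧ (graphOfDyads (↑B : Set (Dyad V))).Reachable u v

/-- The Möbius parameter `z_B = P(X_d = 1 for all d ∈ B)`, as a real number. -/
noncomputable def zParam {V Ω : Type*} [MeasurableSpace Ω] (μ : Measure Ω)
    (X : Dyad V → Ω → Bool) (B : Finset (Dyad V)) : ℝ :=
  (μ {ω | ∀ d ∈ B, X d ω = true}).toReal

/-!
Write `p A = P(X = A)` for the law of the random edge set, so that `z_B = ∑_{A ⊇ B} p A`; Möbius
inversion on the Boolean lattice of edge sets recovers `p` from `z`, and (ii) says that the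
inverted function is `B ↦ ∏_C z_C`, i.e. that `z` factorises over connected components.

Exchangeability is invariance of `p` under relabelling the nodes, and it passes to `z` and back
through the inversion formula. Once `z` factorises, it is determined by its values on connected
edge sets, so (i) is exactly the invariance needed.

Dissociation for disjoint node sets `N₁`, `N₂` says that the restrictions of the edge set to the
dyads inside `N₁` and inside `N₂` are independent. By inclusion–exclusion within these two
blocks of dyads, this is equivalent to `z_{B₁ ∪ B₂} = z_{B₁} z_{B₂}` for edge sets `B₁ ⊆ D(N₁)`,
`B₂ ⊆ D(N₂)`, i.e. to multiplicativity of `z` over edge sets with disjoint supports, which by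
splitting off one component at a time is the factorisation over components.
-/

namespace Finset

section Interval

variable {α R : Type*} [DecidableEq α] [CommRing R]

theorem sum_Icc_neg_one_pow_card_sub (T U : Finset α) :
    ∑ S ∈ Icc T U, (-1 : R) ^ (#S - #T) = if T = U then 1 else 0 := by
  by_cases hTU : T ⊆ U
  · have hinj : Set.InjOn (T ∪ ·) ↑(U \ T).powerset := fun R₁ h₁ R₂ h₂ h => by
      simp only [coe_powerset, Set.mem_preimage, Set.mem_powerset_iff, coe_subset] at h₁ h₂
      rw [← union_sdiff_cancel_left (disjoint_of_subset_right h₁ disjoint_sdiff),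
        ← union_sdiff_cancel_left (disjoint_of_subset_right h₂ disjoint_sdiff (s := T))]
      exact congrArg (· \ T) h
    rw [Icc_eq_image_powerset hTU, sum_image hinj]
    have hcard : ∀ R' ∈ (U \ T).powerset, #(T ∪ R') - #T = #R' := fun R' h => by
      rw [card_union_of_disjoint (disjoint_of_subset_right (mem_powerset.1 h) disjoint_sdiff),
        Nat.add_sub_cancel_left]
    rw [sum_congr rfl fun R' h => by rw [hcard R' h]]
    have := congrArg (Int.cast : ℤ → R) (sum_powerset_neg_one_pow_card (x := U \ T))
    push_cast at this
    rw [this]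
    exact if_congr (sdiff_eq_empty_iff_subset.trans
      ⟨fun h => subset_antisymm hTU h, fun h => h ▸ subset_refl _⟩) rfl rfl
  · rw [Icc_eq_empty fun h => hTU h, sum_empty, if_neg fun h => hTU h.le]

theorem sum_Icc_neg_one_pow_sub_card (T U : Finset α) :
    ∑ S ∈ Icc T U, (-1 : R) ^ (#U - #S) = if T = U then 1 else 0 := by
  have hsign : ∀ S ∈ Icc T U, (-1 : R) ^ (#U - #S) = (-1) ^ (#U - #T) * (-1) ^ (#S - #T) := by
    intro S hS
    obtain ⟨hTS, hSU⟩ := mem_Icc.1 hS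
    rw [← Nat.sub_add_sub_cancel (card_le_card hSU) (card_le_card hTS), pow_add, mul_assoc,
      ← pow_add, Even.neg_one_pow ⟨_, rfl⟩, mul_one]
  rw [sum_congr rfl hsign, ← mul_sum, sum_Icc_neg_one_pow_card_sub]
  split_ifs with h <;> simp [h]

variable {M : Type*} [AddCommMonoid M]

theorem sum_Icc_union {D₁ D₂ T₁ T₂ : Finset α} (hD : Disjoint D₁ D₂) (h₁ : T₁ ⊆ D₁)
    (h₂ : T₂ ⊆ D₂) (f : Finset α → M) :
    ∑ S ∈ Icc (T₁ ∪ T₂) (D₁ ∪ D₂), f S = ∑ S₁ ∈ Icc T₁ D₁, ∑ S₂ ∈ Icc T₂ D₂, f (S₁ ∪ S₂) := by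
  rw [← sum_product']
  refine sum_nbij' (fun S => (S ∩ D₁, S ∩ D₂)) (fun S => S.1 ∪ S.2) ?_ ?_ ?_ ?_ ?_
  · intro S hS
    simp only [mem_Icc, mem_product] at hS ⊢
    grind
  · intro S hS
    simp only [mem_Icc, mem_product] at hS ⊢
    grind
  · intro S hS
    rw [← inter_union_distrib_left, inter_eq_left.2 (mem_Icc.1 hS).2]
  · intro S hS
    simp only [mem_Icc, mem_product] at hS
    have := disjoint_left.1 hD
    refine Prod.ext ?_ ?_ <;> ext x <;> simp only [mem_inter, mem_union] <;> grind
  · intro S hS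
    rw [← inter_union_distrib_left, inter_eq_left.2 (mem_Icc.1 hS).2]

theorem inter_union_eq_union_iff {A D₁ D₂ T₁ T₂ : Finset α} (hD : Disjoint D₁ D₂)
    (h₁ : T₁ ⊆ D₁) (h₂ : T₂ ⊆ D₂) :
    A ∩ (D₁ ∪ D₂) = T₁ ∪ T₂ ↔ A ∩ D₁ = T₁ ∧ A ∩ D₂ = T₂ := by
  have := disjoint_left.1 hD
  simp only [Finset.ext_iff, mem_inter, mem_union]
  constructor
  · intro h
    constructor <;> intro x <;> grind
  · grind

end Interval

section Moebius

variable {α R : Type*} [Fintype α] [DecidableEq α] [CommRing R] (p : Finset α → R)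

theorem sum_Ici_eq_sum_Icc_sum_filter_inter {S D : Finset α} (hSD : S ⊆ D) :
    ∑ A ∈ Ici S, p A = ∑ T ∈ Icc S D, ∑ A with A ∩ D = T, p A := by
  rw [← sum_fiberwise_of_maps_to (g := (· ∩ D)) (t := Icc S D)
    fun A hA => mem_Icc.2 ⟨subset_inter (mem_Ici.1 hA) hSD, inter_subset_right⟩]
  refine sum_congr rfl fun T hT => sum_congr ?_ fun _ _ => rfl
  ext A
  simp only [mem_filter, mem_Ici, mem_univ, true_and, and_iff_right_iff_imp]
  rintro rfl
  exact (mem_Icc.1 hT).1.trans inter_subset_left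

theorem sum_filter_inter_eq_sum_Icc (D T : Finset α) :
    ∑ A with A ∩ D = T, p A = ∑ S ∈ Icc T D, (-1) ^ (#S - #T) * ∑ A ∈ Ici S, p A := by
  calc ∑ A with A ∩ D = T, p A
      = ∑ A, (∑ S ∈ Icc T (A ∩ D), (-1 : R) ^ (#S - #T)) * p A := by
        rw [sum_filter]
        refine sum_congr rfl fun A _ => ?_
        rw [sum_Icc_neg_one_pow_card_sub, ite_mul, one_mul, zero_mul]
        exact if_congr eq_comm rfl rfl
    _ = ∑ S ∈ Icc T D, ∑ A ∈ Ici S, (-1) ^ (#S - #T) * p A := by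
        simp_rw [sum_mul]
        exact sum_comm' fun A S => by
          simp only [mem_univ, mem_Icc, mem_Ici, true_and, subset_inter_iff]
          tauto
    _ = _ := by simp_rw [mul_sum]

theorem eq_sum_Ici_neg_one_pow_mul (T : Finset α) :
    p T = ∑ S ∈ Ici T, (-1) ^ (#S - #T) * ∑ A ∈ Ici S, p A := by
  have h := sum_filter_inter_eq_sum_Icc p univ T
  rwa [filter_congr fun A _ => by rw [inter_univ], filter_eq', if_pos (mem_univ T), sum_singleton,
    ← top_eq_univ, Icc_top] at h

theorem sum_Ici_eq_of_forall_eq_sum_Ici (w : Finset α → R)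
    (h : ∀ T, p T = ∑ S ∈ Ici T, (-1) ^ (#S - #T) * w S) (B : Finset α) :
    ∑ A ∈ Ici B, p A = w B := by
  calc ∑ A ∈ Ici B, p A = ∑ A ∈ Ici B, ∑ S ∈ Ici A, (-1) ^ (#S - #A) * w S :=
        sum_congr rfl fun A _ => h A
    _ = ∑ S ∈ Ici B, (∑ A ∈ Icc B S, (-1 : R) ^ (#S - #A)) * w S := by
        simp_rw [sum_mul]
        exact sum_comm' fun A S => by
          simp only [mem_Icc, mem_Ici]
          tauto
    _ = w B := by
        simp_rw [sum_Icc_neg_one_pow_sub_card, ite_mul, one_mul, zero_mul]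
        simp

theorem sum_Ici_union_eq_mul_iff {D₁ D₂ : Finset α} (hD : Disjoint D₁ D₂) :
    (∀ S₁ ⊆ D₁, ∀ S₂ ⊆ D₂,
      ∑ A ∈ Ici (S₁ ∪ S₂), p A = (∑ A ∈ Ici S₁, p A) * ∑ A ∈ Ici S₂, p A) ↔
    ∀ T₁ ⊆ D₁, ∀ T₂ ⊆ D₂, ∑ A with A ∩ D₁ = T₁ ∧ A ∩ D₂ = T₂, p A =
      (∑ A with A ∩ D₁ = T₁, p A) * ∑ A with A ∩ D₂ = T₂, p A := by
  have hjoint {T₁ T₂ : Finset α} (h₁ : T₁ ⊆ D₁) (h₂ : T₂ ⊆ D₂) :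
      ∑ A with A ∩ D₁ = T₁ ∧ A ∩ D₂ = T₂, p A = ∑ A with A ∩ (D₁ ∪ D₂) = T₁ ∪ T₂, p A :=
    sum_congr (filter_congr fun A _ => (inter_union_eq_union_iff hD h₁ h₂).symm) fun _ _ => rfl
  constructor
  · intro hz T₁ h₁ T₂ h₂
    rw [hjoint h₁ h₂, sum_filter_inter_eq_sum_Icc p (D₁ ∪ D₂), sum_filter_inter_eq_sum_Icc p D₁,
      sum_filter_inter_eq_sum_Icc p D₂, sum_Icc_union hD h₁ h₂, sum_mul_sum]
    refine sum_congr rfl fun S₁ hS₁ => sum_congr rfl fun S₂ hS₂ => ?_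
    obtain ⟨hTS₁, hSD₁⟩ := mem_Icc.1 hS₁
    obtain ⟨hTS₂, hSD₂⟩ := mem_Icc.1 hS₂
    have hcard₁ := card_le_card hTS₁
    have hcard₂ := card_le_card hTS₂
    rw [hz S₁ hSD₁ S₂ hSD₂, card_union_of_disjoint (disjoint_of_subset_left hSD₁
      (disjoint_of_subset_right hSD₂ hD)), card_union_of_disjoint (disjoint_of_subset_left
      (hTS₁.trans hSD₁) (disjoint_of_subset_right (hTS₂.trans hSD₂) hD)),
      show #S₁ + #S₂ - (#T₁ + #T₂) = (#S₁ - #T₁) + (#S₂ - #T₂) by omega, pow_add]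
    ring
  · intro hm S₁ h₁ S₂ h₂
    rw [sum_Ici_eq_sum_Icc_sum_filter_inter p (union_subset_union h₁ h₂),
      sum_Ici_eq_sum_Icc_sum_filter_inter p h₁, sum_Ici_eq_sum_Icc_sum_filter_inter p h₂,
      sum_Icc_union hD h₁ h₂, sum_mul_sum]
    refine sum_congr rfl fun T₁ hT₁ => sum_congr rfl fun T₂ hT₂ => ?_
    rw [← hjoint (mem_Icc.1 hT₁).2 (mem_Icc.1 hT₂).2, hm _ (mem_Icc.1 hT₁).2 _ (mem_Icc.1 hT₂).2]

theorem sum_Ici_image_equiv (σ : Equiv.Perm α) {M : Type*} [AddCommMonoid M]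
    (f : Finset α → M) (A : Finset α) :
    ∑ B ∈ Ici (A.image σ), f B = ∑ B ∈ Ici A, f (B.image σ) := by
  refine (sum_equiv σ.finsetCongr (fun B => ?_) fun B _ => ?_).symm
  · simp [map_eq_image, image_subset_image_iff σ.injective]
  · simp [map_eq_image]

theorem sum_Ici_image_eq_of_forall_image_eq (σ : Equiv.Perm α) (hp : ∀ A, p (A.image σ) = p A)
    (B : Finset α) : ∑ A ∈ Ici (B.image σ), p A = ∑ A ∈ Ici B, p A := by
  simp_rw [sum_Ici_image_equiv, hp]

theorem image_eq_of_eq_sum_Ici (σ : Equiv.Perm α) (w : Finset α → R)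
    (h : ∀ T, p T = ∑ S ∈ Ici T, (-1) ^ (#S - #T) * w S) (hw : ∀ S, w (S.image σ) = w S)
    (T : Finset α) : p (T.image σ) = p T := by
  simp_rw [h, sum_Ici_image_equiv, hw, card_image_of_injective _ σ.injective]

end Moebius

end Finset

theorem SimpleGraph.Reachable.of_adj_closed {V : Type*} {G H : SimpleGraph V} {S : Set V}
    (hS : ∀ a b, G.Adj a b → a ∈ S → H.Adj a b ∧ b ∈ S) {u v : V} (hu : u ∈ S)
    (h : G.Reachable u v) : H.Reachable u v ∧ v ∈ S := by
  obtain ⟨w⟩ := h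
  induction w with
  | nil => exact ⟨.rfl, hu⟩
  | cons hadj _ ih =>
    obtain ⟨hH, hb⟩ := hS _ _ hadj hu
    obtain ⟨hr, hv⟩ := ih hb
    exact ⟨hH.reachable.trans hr, hv⟩

section Components

open Finset

variable {V : Type*}

theorem graphOfDyads_adj {C : Set (Dyad V)} {a b : V} :
    (graphOfDyads C).Adj a b ↔ ∃ d ∈ C, d.1 = s(a, b) := by
  simp [graphOfDyads]

theorem graphOfDyads_mono {C B : Set (Dyad V)} (h : C ⊆ B) : graphOfDyads C ≤ graphOfDyads B :=
  SimpleGraph.fromEdgeSet_mono (Set.image_mono h)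

theorem reachable_graphOfDyads_of_mem {C : Set (Dyad V)} {d : Dyad V} (hd : d ∈ C) {u v : V}
    (hu : u ∈ d.1) (hv : v ∈ d.1) : (graphOfDyads C).Reachable u v := by
  by_cases huv : u = v
  · exact huv ▸ .rfl
  · exact (graphOfDyads_adj.2 ⟨d, hd, (Sym2.mem_and_mem_iff huv).1 ⟨hu, hv⟩⟩).reachable

theorem reachable_graphOfDyads_of_closed {B C : Set (Dyad V)}
    (hC : ∀ e ∈ B, ∀ x ∈ e.1, x ∈ dyadSupp C → e ∈ C) {u v : V} (hu : u ∈ dyadSupp C)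
    (h : (graphOfDyads B).Reachable u v) : (graphOfDyads C).Reachable u v ∧ v ∈ dyadSupp C := by
  refine h.of_adj_closed (fun a b hab ha => ?_) hu
  obtain ⟨d, hd, hdab⟩ := graphOfDyads_adj.1 hab
  have hdC : d ∈ C := hC d hd a (hdab ▸ Sym2.mem_mk_left a b) ha
  exact ⟨graphOfDyads_adj.2 ⟨d, hdC, hdab⟩, d, hdC, hdab ▸ Sym2.mem_mk_right a b⟩

def DyadsLinked (B : Finset (Dyad V)) (d e : Dyad V) : Prop :=
  ∃ u v, u ∈ d.1 ∧ v ∈ e.1 ∧ (graphOfDyads (↑B : Set (Dyad V))).Reachable u v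

namespace DyadsLinked

variable {B : Finset (Dyad V)} {d e f : Dyad V}

theorem refl (d : Dyad V) : DyadsLinked B d d :=
  ⟨_, _, Sym2.out_fst_mem d.1, Sym2.out_fst_mem d.1, .rfl⟩

theorem symm : DyadsLinked B d e → DyadsLinked B e d
  | ⟨u, v, hu, hv, h⟩ => ⟨v, u, hv, hu, h.symm⟩

theorem trans (he : e ∈ B) : DyadsLinked B d e → DyadsLinked B e f → DyadsLinked B d f
  | ⟨u, _, hu, hv, h⟩, ⟨_, v', hu', hv', h'⟩ =>
    ⟨u, v', hu, hv', (h.trans (reachable_graphOfDyads_of_mem he hv hu')).trans h'⟩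

theorem reachable (hd : d ∈ B) (he : e ∈ B) (h : DyadsLinked B d e) {u v : V} (hu : u ∈ d.1)
    (hv : v ∈ e.1) : (graphOfDyads (↑B : Set (Dyad V))).Reachable u v :=
  have ⟨_, _, hu', hv', h⟩ := h
  ((reachable_graphOfDyads_of_mem hd hu hu').trans h).trans
    (reachable_graphOfDyads_of_mem he hv' hv)

end DyadsLinked

noncomputable def dyadComponent (B : Finset (Dyad V)) (d : Dyad V) : Finset (Dyad V) := by
  classical exact B.filter (DyadsLinked B d)

variable {B B₁ B₂ C : Finset (Dyad V)} {d e : Dyad V}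

theorem mem_dyadComponent : e ∈ dyadComponent B d ↔ e ∈ B ∧ DyadsLinked B d e := by
  classical
  simp [dyadComponent]

theorem dyadComponent_subset : dyadComponent B d ⊆ B :=
  fun _ he => (mem_dyadComponent.1 he).1

theorem self_mem_dyadComponent (hd : d ∈ B) : d ∈ dyadComponent B d :=
  mem_dyadComponent.2 ⟨hd, .refl d⟩

theorem mem_dyadComponent_of_mem_dyadSupp (he : e ∈ B) {x : V} (hxe : x ∈ e.1)
    (hx : x ∈ dyadSupp (↑(dyadComponent B d) : Set (Dyad V))) : e ∈ dyadComponent B d := by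
  obtain ⟨e', he', hxe'⟩ := hx
  obtain ⟨he'B, hde'⟩ := mem_dyadComponent.1 he'
  exact mem_dyadComponent.2 ⟨he, hde'.trans he'B ⟨x, x, hxe', hxe, .rfl⟩⟩

theorem isConnEdgeSet_dyadComponent (hd : d ∈ B) :
    IsConnEdgeSet (↑(dyadComponent B d) : Set (Dyad V)) := by
  refine ⟨⟨d, self_mem_dyadComponent hd⟩, fun u hu v ⟨e', he', hve'⟩ => ?_⟩
  obtain ⟨e, he, hue⟩ := hu
  obtain ⟨heB, hde⟩ := mem_dyadComponent.1 he
  obtain ⟨he'B, hde'⟩ := mem_dyadComponent.1 he'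
  have := (hde.symm.trans hd hde').reachable heB he'B hue hve'
  exact (reachable_graphOfDyads_of_closed
    (fun e he x hx hxC => mem_dyadComponent_of_mem_dyadSupp he hx hxC) ⟨e, he, hue⟩ this).1

variable {π : Equiv.Perm V}

def dyadEquiv (π : Equiv.Perm V) : Equiv.Perm (Dyad V) where
  toFun := dyadPerm π
  invFun := dyadPerm π.symm
  left_inv d := Subtype.ext <| by simp [dyadPerm, Sym2.map_map]
  right_inv d := Subtype.ext <| by simp [dyadPerm, Sym2.map_map]

@[simp]
theorem coe_dyadEquiv : ⇑(dyadEquiv π) = dyadPerm π :=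
  rfl

theorem dyadPerm_injective : Function.Injective (dyadPerm π) :=
  (dyadEquiv π).injective

theorem mem_dyadPerm {u : V} : π u ∈ (dyadPerm π d).1 ↔ u ∈ d.1 := by
  simp [dyadPerm]

variable [DecidableEq V]

theorem disjoint_dyadSupp_dyadComponent_sdiff :
    Disjoint (dyadSupp (↑(dyadComponent B d) : Set (Dyad V)))
      (dyadSupp (↑(B \ dyadComponent B d) : Set (Dyad V))) := by
  refine Set.disjoint_left.2 fun x hx ⟨e, he, hxe⟩ => ?_
  obtain ⟨heB, heC⟩ := mem_sdiff.1 he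
  exact heC (mem_dyadComponent_of_mem_dyadSupp heB hxe hx)

theorem dyadComponent_union_left
    (hsupp : Disjoint (dyadSupp (↑B₁ : Set (Dyad V))) (dyadSupp (↑B₂ : Set (Dyad V))))
    (hd : d ∈ B₁) : dyadComponent (B₁ ∪ B₂) d = dyadComponent B₁ d := by
  have hclosed : ∀ e ∈ (↑(B₁ ∪ B₂) : Set (Dyad V)), ∀ x ∈ e.1,
      x ∈ dyadSupp (↑B₁ : Set (Dyad V)) → e ∈ (↑B₁ : Set (Dyad V)) := by
    intro e he x hxe hx
    rcases mem_union.1 he with h | h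
    · exact h
    · exact absurd ⟨e, h, hxe⟩ (Set.disjoint_left.1 hsupp hx)
  ext e
  simp only [mem_dyadComponent]
  constructor
  · rintro ⟨he, u, v, hu, hv, h⟩
    obtain ⟨h', hv'⟩ := reachable_graphOfDyads_of_closed hclosed ⟨d, hd, hu⟩ h
    exact ⟨hclosed e he v hv hv', u, v, hu, hv, h'⟩
  · rintro ⟨he, u, v, hu, hv, h⟩
    exact ⟨mem_union_left _ he, u, v, hu, hv,
      h.mono (graphOfDyads_mono (coe_subset.2 subset_union_left))⟩

theorem graphOfDyads_image_adj {a b : V} :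
    (graphOfDyads (↑(B.image (dyadPerm π)) : Set (Dyad V))).Adj (π a) (π b) ↔
      (graphOfDyads (↑B : Set (Dyad V))).Adj a b := by
  simp only [graphOfDyads_adj, coe_image, Set.exists_mem_image]
  refine exists_congr fun d => and_congr_right fun _ => ?_
  rw [dyadPerm, ← Sym2.map_mk, (Sym2.map.injective π.injective).eq_iff]

def graphOfDyadsIso (B : Finset (Dyad V)) (π : Equiv.Perm V) :
    graphOfDyads (↑B : Set (Dyad V)) ≃g graphOfDyads (↑(B.image (dyadPerm π)) : Set (Dyad V)) :=
  ⟨π, graphOfDyads_image_adj⟩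

theorem dyadsLinked_image :
    DyadsLinked (B.image (dyadPerm π)) (dyadPerm π d) (dyadPerm π e) ↔ DyadsLinked B d e := by
  constructor
  · rintro ⟨u, v, hu, hv, h⟩
    obtain ⟨u, rfl⟩ := π.surjective u
    obtain ⟨v, rfl⟩ := π.surjective v
    exact ⟨u, v, mem_dyadPerm.1 hu, mem_dyadPerm.1 hv,
      (SimpleGraph.Iso.reachable_iff (φ := graphOfDyadsIso B π)).1 h⟩
  · rintro ⟨u, v, hu, hv, h⟩
    exact ⟨π u, π v, mem_dyadPerm.2 hu, mem_dyadPerm.2 hv,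
      (SimpleGraph.Iso.reachable_iff (φ := graphOfDyadsIso B π)).2 h⟩

theorem dyadComponent_image :
    dyadComponent (B.image (dyadPerm π)) (dyadPerm π d) =
      (dyadComponent B d).image (dyadPerm π) := by
  ext e'
  obtain ⟨e, rfl⟩ := (dyadEquiv π).surjective e'
  simp only [coe_dyadEquiv, mem_dyadComponent, dyadPerm_injective.mem_finset_image,
    dyadsLinked_image]

variable [Fintype V]

theorem componentsOf_eq_image (B : Finset (Dyad V)) :
    componentsOf B = B.image (dyadComponent B) := by
  classical
  unfold componentsOf dyadComponent DyadsLinked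
  convert rfl

theorem componentsOf_image :
    componentsOf (B.image (dyadPerm π)) = (componentsOf B).image (·.image (dyadPerm π)) := by
  rw [componentsOf_eq_image, componentsOf_eq_image, image_image, image_image]
  exact image_congr fun d _ => dyadComponent_image

theorem componentsOf_union
    (hsupp : Disjoint (dyadSupp (↑B₁ : Set (Dyad V))) (dyadSupp (↑B₂ : Set (Dyad V)))) :
    componentsOf (B₁ ∪ B₂) = componentsOf B₁ ∪ componentsOf B₂ := by
  rw [componentsOf_eq_image, componentsOf_eq_image, componentsOf_eq_image, image_union]
  congr 1
  · exact image_congr fun d hd => dyadComponent_union_left hsupp hd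
  · exact image_congr fun d hd => by rw [union_comm]; exact dyadComponent_union_left hsupp.symm hd

theorem componentsOf_empty : componentsOf (∅ : Finset (Dyad V)) = ∅ := by
  rw [componentsOf_eq_image, image_empty]

theorem componentsOf_of_isConnEdgeSet (h : IsConnEdgeSet (↑C : Set (Dyad V))) :
    componentsOf C = {C} := by
  obtain ⟨⟨d, hd⟩, hconn⟩ := h
  have hcomp : ∀ e ∈ C, dyadComponent C e = C := fun e he => by
    refine subset_antisymm dyadComponent_subset fun f hf => mem_dyadComponent.2 ⟨hf, ?_⟩
    exact ⟨_, _, Sym2.out_fst_mem e.1, Sym2.out_fst_mem f.1,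
      hconn _ ⟨e, he, Sym2.out_fst_mem e.1⟩ _ ⟨f, hf, Sym2.out_fst_mem f.1⟩⟩
  rw [componentsOf_eq_image, image_congr hcomp, image_const ⟨d, hd⟩]

theorem exists_dyadComponent_of_mem_componentsOf (h : C ∈ componentsOf B) :
    ∃ d ∈ B, dyadComponent B d = C := by
  rwa [componentsOf_eq_image, mem_image] at h

theorem subset_of_mem_componentsOf (h : C ∈ componentsOf B) : C ⊆ B := by
  obtain ⟨d, -, rfl⟩ := exists_dyadComponent_of_mem_componentsOf h
  exact dyadComponent_subset

theorem nonempty_of_mem_componentsOf (h : C ∈ componentsOf B) : C.Nonempty := by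
  obtain ⟨d, hd, rfl⟩ := exists_dyadComponent_of_mem_componentsOf h
  exact ⟨d, self_mem_dyadComponent hd⟩

theorem isConnEdgeSet_of_mem_componentsOf (h : C ∈ componentsOf B) :
    IsConnEdgeSet (↑C : Set (Dyad V)) := by
  obtain ⟨d, hd, rfl⟩ := exists_dyadComponent_of_mem_componentsOf h
  exact isConnEdgeSet_dyadComponent hd

theorem IsConnEdgeSet.image_dyadPerm (h : IsConnEdgeSet (↑C : Set (Dyad V))) :
    IsConnEdgeSet (↑(C.image (dyadPerm π)) : Set (Dyad V)) := by
  refine isConnEdgeSet_of_mem_componentsOf (B := C.image (dyadPerm π)) ?_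
  rw [componentsOf_image, componentsOf_of_isConnEdgeSet h, image_singleton]
  exact mem_singleton_self _

theorem disjoint_componentsOf
    (hsupp : Disjoint (dyadSupp (↑B₁ : Set (Dyad V))) (dyadSupp (↑B₂ : Set (Dyad V)))) :
    Disjoint (componentsOf B₁) (componentsOf B₂) := by
  refine disjoint_left.2 fun C h₁ h₂ => ?_
  obtain ⟨e, he⟩ := nonempty_of_mem_componentsOf h₁
  exact Set.disjoint_left.1 hsupp ⟨e, subset_of_mem_componentsOf h₁ he, Sym2.out_fst_mem e.1⟩
    ⟨e, subset_of_mem_componentsOf h₂ he, Sym2.out_fst_mem e.1⟩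

variable {M : Type*} [CommMonoid M] (F : Finset (Dyad V) → M)

theorem prod_componentsOf_image (hF : ∀ C : Finset (Dyad V), IsConnEdgeSet (↑C : Set (Dyad V)) →
      F (C.image (dyadPerm π)) = F C) (B : Finset (Dyad V)) :
    ∏ C ∈ componentsOf (B.image (dyadPerm π)), F C = ∏ C ∈ componentsOf B, F C := by
  rw [componentsOf_image, prod_image fun C _ C' _ h => image_injective dyadPerm_injective h]
  exact prod_congr rfl fun C hC => hF C (isConnEdgeSet_of_mem_componentsOf hC)

theorem prod_componentsOf_union
    (hsupp : Disjoint (dyadSupp (↑B₁ : Set (Dyad V))) (dyadSupp (↑B₂ : Set (Dyad V)))) :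
    ∏ C ∈ componentsOf (B₁ ∪ B₂), F C =
      (∏ C ∈ componentsOf B₁, F C) * ∏ C ∈ componentsOf B₂, F C := by
  rw [componentsOf_union hsupp, prod_union (disjoint_componentsOf hsupp)]

theorem map_union_eq_mul_iff_eq_prod_componentsOf (hF : F ∅ = 1) :
    (∀ B₁ B₂ : Finset (Dyad V),
      Disjoint (dyadSupp (↑B₁ : Set (Dyad V))) (dyadSupp (↑B₂ : Set (Dyad V))) →
        F (B₁ ∪ B₂) = F B₁ * F B₂) ↔
      ∀ B, F B = ∏ C ∈ componentsOf B, F C := by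
  constructor
  · intro hmul B
    induction B using Finset.strongInduction with
    | H B ih =>
      rcases B.eq_empty_or_nonempty with rfl | ⟨d, hd⟩
      · rw [componentsOf_empty, prod_empty, hF]
      · have hB : B = dyadComponent B d ∪ (B \ dyadComponent B d) :=
          (union_sdiff_of_subset dyadComponent_subset).symm
        have hsupp := disjoint_dyadSupp_dyadComponent_sdiff (B := B) (d := d)
        rw [hB, hmul _ _ hsupp, prod_componentsOf_union F hsupp,
          componentsOf_of_isConnEdgeSet (isConnEdgeSet_dyadComponent hd), prod_singleton,
          ← ih _ (sdiff_ssubset dyadComponent_subset ⟨d, self_mem_dyadComponent hd⟩)]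
  · intro hprod B₁ B₂ hsupp
    rw [hprod, hprod B₁, hprod B₂, prod_componentsOf_union F hsupp]

end Components

section RandomNetwork

open Finset

variable {V Ω : Type*} [Fintype V] [DecidableEq V]

def edgesAt (X : Dyad V → Ω → Bool) (ω : Ω) : Finset (Dyad V) := {d | X d ω = true}

noncomputable def dyadsIn (N : Set V) : Finset (Dyad V) := by
  classical exact {d | dyadIn d N}

variable {X : Dyad V → Ω → Bool}

theorem mem_dyadsIn {N : Set V} {d : Dyad V} : d ∈ dyadsIn N ↔ dyadIn d N := by
  unfold dyadsIn
  simp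

theorem subset_dyadsIn_dyadSupp (B : Finset (Dyad V)) :
    B ⊆ dyadsIn (dyadSupp (↑B : Set (Dyad V))) :=
  fun d hd => mem_dyadsIn.2 fun _ hv => ⟨d, hd, hv⟩

theorem dyadSupp_subset_of_subset_dyadsIn {S : Finset (Dyad V)} {N : Set V}
    (h : S ⊆ dyadsIn N) : dyadSupp (↑S : Set (Dyad V)) ⊆ N :=
  fun _ ⟨_, hd, hx⟩ => mem_dyadsIn.1 (h hd) _ hx

theorem disjoint_dyadsIn {N₁ N₂ : Set V} (h : Disjoint N₁ N₂) :
    Disjoint (dyadsIn N₁) (dyadsIn N₂ : Finset (Dyad V)) :=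
  disjoint_left.2 fun d h₁ h₂ => Set.disjoint_left.1 h (mem_dyadsIn.1 h₁ _ (Sym2.out_fst_mem d.1))
    (mem_dyadsIn.1 h₂ _ (Sym2.out_fst_mem d.1))

theorem forall_subset_dyadsIn_iff {P : Finset (Dyad V) → Finset (Dyad V) → Prop} :
    (∀ N₁ N₂ : Set V, Disjoint N₁ N₂ → ∀ S₁ ⊆ dyadsIn N₁, ∀ S₂ ⊆ dyadsIn N₂, P S₁ S₂) ↔
      ∀ B₁ B₂ : Finset (Dyad V),
        Disjoint (dyadSupp (↑B₁ : Set (Dyad V))) (dyadSupp (↑B₂ : Set (Dyad V))) → P B₁ B₂ :=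
  ⟨fun h B₁ B₂ hB => h _ _ hB B₁ (subset_dyadsIn_dyadSupp B₁) B₂ (subset_dyadsIn_dyadSupp B₂),
    fun h _ _ hN S₁ h₁ S₂ h₂ => h S₁ S₂
      (hN.mono (dyadSupp_subset_of_subset_dyadsIn h₁) (dyadSupp_subset_of_subset_dyadsIn h₂))⟩

theorem edgesAt_inter_eq_filter_iff {D : Finset (Dyad V)} {f : Dyad V → Bool} {ω : Ω} :
    edgesAt X ω ∩ D = {d ∈ D | f d = true} ↔ ∀ d ∈ D, X d ω = f d := by
  simp only [Finset.ext_iff, edgesAt, mem_inter, mem_filter, mem_univ, true_and]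
  exact forall_congr' fun d => by by_cases hd : d ∈ D <;> cases X d ω <;> cases f d <;> simp [hd]

theorem edgesAt_eq_image_filter_iff (σ : Equiv.Perm (Dyad V)) {f : Dyad V → Bool} {ω : Ω} :
    edgesAt X ω = ({d | f d = true} : Finset _).image σ ↔ ∀ d, X (σ d) ω = f d := by
  rw [Finset.ext_iff, σ.symm.forall_congr_left]
  refine forall_congr' fun d => ?_
  simp only [edgesAt, Equiv.symm_symm, mem_filter, mem_univ, true_and,
    σ.injective.mem_finset_image]
  cases X (σ d) ω <;> cases f d <;> simp

theorem edgesAt_eq_filter_iff {f : Dyad V → Bool} {ω : Ω} :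
    edgesAt X ω = ({d | f d = true} : Finset _) ↔ ∀ d, X d ω = f d := by
  simpa using edgesAt_eq_image_filter_iff (X := X) (Equiv.refl _) (f := f) (ω := ω)

variable [MeasurableSpace Ω]

noncomputable def edgeSetProb (μ : Measure Ω) (X : Dyad V → Ω → Bool) (A : Finset (Dyad V)) : ℝ :=
  μ.real {ω | edgesAt X ω = A}

theorem measurableSet_edgesAt_eq (hX : ∀ d, Measurable (X d)) (A : Finset (Dyad V)) :
    MeasurableSet {ω | edgesAt X ω = A} := by
  have hA : {ω | edgesAt X ω = A} = ⋂ d, X d ⁻¹' {b | b = true ↔ d ∈ A} := by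
    ext ω
    simp [edgesAt, Finset.ext_iff]
  rw [hA]
  exact MeasurableSet.iInter fun d => hX d (.of_discrete)

variable {μ : Measure Ω} [IsFiniteMeasure μ]

theorem measureReal_edgesAt_mem (hX : ∀ d, Measurable (X d)) (P : Finset (Dyad V) → Prop)
    [DecidablePred P] : μ.real {ω | P (edgesAt X ω)} = ∑ A with P A, edgeSetProb μ X A := by
  calc μ.real {ω | P (edgesAt X ω)} = μ.real (edgesAt X ⁻¹' ↑({A | P A} : Finset _)) := by
        congr 1
        ext ω
        simp
    _ = _ := (sum_measureReal_preimage_singleton _ fun A _ => measurableSet_edgesAt_eq hX A).symm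

theorem zParam_eq_sum_Ici (hX : ∀ d, Measurable (X d)) (B : Finset (Dyad V)) :
    zParam μ X B = ∑ A ∈ Ici B, edgeSetProb μ X A := by
  have hB : {ω | ∀ d ∈ B, X d ω = true} = {ω | B ⊆ edgesAt X ω} := by
    ext ω
    simp [subset_iff, edgesAt]
  rw [zParam, ← measureReal_def, hB, measureReal_edgesAt_mem hX, ← filter_le_eq_Ici]

theorem isExchangeable_iff :
    IsExchangeable μ X ↔
      ∀ (π : Equiv.Perm V) A, edgeSetProb μ X (A.image (dyadPerm π)) = edgeSetProb μ X A := by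
  have hevent (π : Equiv.Perm V) (f : Dyad V → Bool) :
      μ {ω | ∀ d, X (dyadPerm π d) ω = f d} = μ {ω | ∀ d, X d ω = f d} ↔
        edgeSetProb μ X (({d | f d = true} : Finset _).image (dyadPerm π)) =
          edgeSetProb μ X ({d | f d = true} : Finset _) := by
    simp_rw [← coe_dyadEquiv, ← edgesAt_eq_image_filter_iff, ← edgesAt_eq_filter_iff]
    exact (measureReal_eq_measureReal_iff).symm
  simp_rw [IsExchangeable, hevent]
  exact forall_congr' fun π => ⟨fun h A => by simpa using h (· ∈ A), fun h f => h _⟩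

theorem measure_eq_mul_iff_measureReal {r s t : Set Ω} :
    μ r = μ s * μ t ↔ μ.real r = μ.real s * μ.real t := by
  rw [measureReal_def, measureReal_def, measureReal_def, ← ENNReal.toReal_mul,
    ENNReal.toReal_eq_toReal_iff' (measure_ne_top _ _)
      (ENNReal.mul_ne_top (measure_ne_top _ _) (measure_ne_top _ _))]

theorem isDissociated_iff_sum_edgeSetProb (hX : ∀ d, Measurable (X d)) :
    IsDissociated μ X ↔ ∀ N₁ N₂ : Set V, Disjoint N₁ N₂ →
      ∀ T₁ ⊆ dyadsIn N₁, ∀ T₂ ⊆ dyadsIn N₂,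
        ∑ A with A ∩ dyadsIn N₁ = T₁ ∧ A ∩ dyadsIn N₂ = T₂, edgeSetProb μ X A =
          (∑ A with A ∩ dyadsIn N₁ = T₁, edgeSetProb μ X A) *
            ∑ A with A ∩ dyadsIn N₂ = T₂, edgeSetProb μ X A := by
  have hevent (N : Set V) (f : Dyad V → Bool) : {ω | ∀ d, dyadIn d N → X d ω = f d} =
      {ω | edgesAt X ω ∩ dyadsIn N = {d ∈ dyadsIn N | f d = true}} := by
    ext ω
    simp only [Set.mem_ofPred_eq, edgesAt_inter_eq_filter_iff, mem_dyadsIn]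
  have key (N₁ N₂ : Set V) (f g : Dyad V → Bool) :
      μ ({ω | ∀ d, dyadIn d N₁ → X d ω = f d} ∩ {ω | ∀ d, dyadIn d N₂ → X d ω = g d}) =
          μ {ω | ∀ d, dyadIn d N₁ → X d ω = f d} * μ {ω | ∀ d, dyadIn d N₂ → X d ω = g d} ↔
        ∑ A with A ∩ dyadsIn N₁ = {d ∈ dyadsIn N₁ | f d = true} ∧
            A ∩ dyadsIn N₂ = {d ∈ dyadsIn N₂ | g d = true}, edgeSetProb μ X A =
          (∑ A with A ∩ dyadsIn N₁ = {d ∈ dyadsIn N₁ | f d = true}, edgeSetProb μ X A) *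
            ∑ A with A ∩ dyadsIn N₂ = {d ∈ dyadsIn N₂ | g d = true}, edgeSetProb μ X A := by
    rw [hevent, hevent, ← Set.ofPred_and, measure_eq_mul_iff_measureReal,
      measureReal_edgesAt_mem hX (fun A => A ∩ _ = _ ∧ A ∩ _ = _),
      measureReal_edgesAt_mem hX (fun A => A ∩ _ = _),
      measureReal_edgesAt_mem hX (fun A => A ∩ _ = _)]
  refine forall₃_congr fun N₁ N₂ _ => ⟨fun h T₁ h₁ T₂ h₂ => ?_,
    fun h f g => (key N₁ N₂ f g).2 (h _ (filter_subset _ _) _ (filter_subset _ _))⟩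
  simpa [filter_mem_eq_inter, inter_eq_right.2 h₁, inter_eq_right.2 h₂] using
    (key N₁ N₂ (· ∈ T₁) (· ∈ T₂)).1 (h _ _)

theorem isDissociated_iff (hX : ∀ d, Measurable (X d)) :
    IsDissociated μ X ↔ ∀ B₁ B₂ : Finset (Dyad V),
      Disjoint (dyadSupp (↑B₁ : Set (Dyad V))) (dyadSupp (↑B₂ : Set (Dyad V))) →
        zParam μ X (B₁ ∪ B₂) = zParam μ X B₁ * zParam μ X B₂ := by
  refine (isDissociated_iff_sum_edgeSetProb hX).trans (Iff.trans ?_ forall_subset_dyadsIn_iff)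
  refine forall₃_congr fun N₁ N₂ hN => ?_
  simp_rw [zParam_eq_sum_Ici hX]
  exact (sum_Ici_union_eq_mul_iff _ (disjoint_dyadsIn hN)).symm

end RandomNetwork

/-- A random network `X` is exchangeable and dissociated iff
(i) `z_C = z_{C′}` whenever `C`, `C′` are nonempty connected edge sets with isomorphic
associated graphs, and (ii) for every graph `x` on `N` (identified with its edge set
`A`), `P(X = x) = Σ_{A ⊆ B ⊆ D(N)} (−1)^{|B|−|A|} Π_C z_C`, where the product runs over
the edge sets `C` of the connected components of `B`. -/
theorem stmt12 {V Ω : Type*} [Fintype V] [DecidableEq V] [MeasurableSpace Ω]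
    (μ : Measure Ω) [IsProbabilityMeasure μ] (X : Dyad V → Ω → Bool)
    (hmeas : ∀ d : Dyad V, Measurable (X d)) :
    (IsExchangeable μ X ∧ IsDissociated μ X) ↔
      ((∀ C C' : Finset (Dyad V),
          IsConnEdgeSet (↑C : Set (Dyad V)) → IsConnEdgeSet (↑C' : Set (Dyad V)) →
          (∃ π : Equiv.Perm V, C.image (dyadPerm π) = C') →
          zParam μ X C = zParam μ X C') ∧
        (∀ A : Finset (Dyad V),
          (μ {ω | ∀ d : Dyad V, X d ω = true ↔ d ∈ A}).toReal
            = ∑ B ∈ Finset.univ.filter (fun B : Finset (Dyad V) => A ⊆ B),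
                (-1 : ℝ) ^ (B.card - A.card) *
                  ∏ C ∈ componentsOf B, zParam μ X C)) := by
  have hz := zParam_eq_sum_Ici (μ := μ) hmeas
  have hprob (A : Finset (Dyad V)) :
      (μ {ω | ∀ d : Dyad V, X d ω = true ↔ d ∈ A}).toReal = edgeSetProb μ X A := by
    simp [edgeSetProb, edgesAt, Finset.ext_iff, measureReal_def]
  have hIci (A : Finset (Dyad V)) : ({B | A ⊆ B} : Finset _) = Finset.Ici A :=
    Finset.filter_le_eq_Ici
  simp_rw [hprob, hIci]
  rw [isExchangeable_iff, isDissociated_iff hmeas,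
    map_union_eq_mul_iff_eq_prod_componentsOf _ (by simp [zParam])]
  constructor
  · rintro ⟨hexch, hprod⟩
    refine ⟨fun C C' _ _ ⟨π, hπ⟩ => ?_, fun A => ?_⟩
    · rw [← hπ, hz, hz]
      exact (Finset.sum_Ici_image_eq_of_forall_image_eq _ (dyadEquiv π) (hexch π) C).symm
    · rw [Finset.eq_sum_Ici_neg_one_pow_mul (edgeSetProb μ X) A]
      exact Finset.sum_congr rfl fun B _ => by rw [← hz, ← hprod]
  · rintro ⟨hzinv, hform⟩
    have hprod (B : Finset (Dyad V)) : zParam μ X B = ∏ C ∈ componentsOf B, zParam μ X C := by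
      rw [hz]
      exact Finset.sum_Ici_eq_of_forall_eq_sum_Ici _ _ hform B
    refine ⟨fun π => Finset.image_eq_of_eq_sum_Ici _ (dyadEquiv π) _ hform
      (prod_componentsOf_image _ fun C hC => ?_), hprod⟩
    exact (hzinv C _ hC hC.image_dyadPerm ⟨π, rfl⟩).symm
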